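/- Let U = {(u,v) ∈ ℝ² : 1 − u < v < 1 + u, 4u ≤ v²} with u ∈ (0,1). Then U = {(u,v) : ∃ s,t ∈ (0,1), u = st, v = s + t, 1 − u < v}. Moreover, the function f(u,v) = 1/2 + ((1+u)² − v²)/(4(1−u)) on U has supremum 1/√2, approached as (u,v) → (3 − 2√2, 2√2 − 2) along v = 2√u. -/
import Mathlib

noncomputable def U : Set (ℝ × ℝ) :=
  {p | 0 < p.1 ∧ p.1 < 1 ∧ 1 - p.1 < p.2 ∧ p.2 < 1 + p.1 ∧ 4 * p.1 ≤ p.2 ^ 2}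

noncomputable def f (p : ℝ × ℝ) : ℝ :=
  1 / 2 + ((1 + p.1) ^ 2 - p.2 ^ 2) / (4 * (1 - p.1))

set_option maxHeartbeats 1000000 in
theorem stmt_18 :
    U = {p : ℝ × ℝ | ∃ s t : ℝ, s ∈ Set.Ioo (0:ℝ) 1 ∧ t ∈ Set.Ioo (0:ℝ) 1 ∧
        p.1 = s * t ∧ p.2 = s + t ∧ 1 - p.1 < p.2} ∧
    sSup (f '' U) = 1 / Real.sqrt 2 := by
  have sqrt2 : Real.sqrt 2 ^ 2 = 2 := Real.sq_sqrt (by norm_num)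
  have sqrt2pos : 0 < Real.sqrt 2 := Real.sqrt_pos.mpr (by norm_num)
  have sqrt2lt : Real.sqrt 2 < 3/2 := by nlinarith
  have sqrt2gt : 1 < Real.sqrt 2 := by nlinarith
  have h12 : (1:ℝ)/Real.sqrt 2 = Real.sqrt 2 / 2 := by
    rw [div_eq_div_iff (ne_of_gt sqrt2pos) (by norm_num : (2:ℝ) ≠ 0)]; nlinarith
  constructor
  · ext ⟨u, v⟩
    simp only [U, Set.mem_setOf_eq]
    constructor
    · rintro ⟨hu0, hu1, h1, h2, h3⟩
      have hv0 : 0 < v := by linarith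
      set d := Real.sqrt (v^2 - 4*u) with hd
      have hd2 : d^2 = v^2 - 4*u := Real.sq_sqrt (by linarith)
      have hdnn : 0 ≤ d := Real.sqrt_nonneg _
      have hdv : d < v := by
        rw [hd, Real.sqrt_lt' hv0]; nlinarith
      have hd2v : d < 2 - v := by
        rw [hd, Real.sqrt_lt' (by linarith)]; nlinarith
      exact ⟨(v+d)/2, (v-d)/2, ⟨by linarith, by linarith⟩, ⟨by linarith, by linarith⟩,
        by nlinarith, by ring, h1⟩
    · rintro ⟨s, t, ⟨hs0, hs1⟩, ⟨ht0, ht1⟩, hu, hv, h1⟩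
      subst hu; subst hv
      exact ⟨by nlinarith, by nlinarith, h1, by nlinarith, by nlinarith [sq_nonneg (s-t)]⟩
  · have hub : ∀ p ∈ U, f p ≤ 1 / Real.sqrt 2 := by
      rintro ⟨u, v⟩ ⟨hu0, hu1, h1, h2, h3⟩
      have h1u : 0 < 1 - u := by linarith
      have hv0 : 0 < v := by linarith
      have key : (1+u)^2 - v^2 ≤ 2*(Real.sqrt 2 - 1)*(1-u) := by
        rcases le_or_gt (1-u) (2*Real.sqrt 2 - 2) with h | h
        · nlinarith
        · nlinarith [sq_nonneg (v - (1-u))]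
      have : f (u, v) = 1/2 + ((1+u)^2 - v^2)/(4*(1-u)) := rfl
      rw [this, h12]
      have h4 : ((1+u)^2 - v^2)/(4*(1-u)) ≤ (Real.sqrt 2 - 1)/2 := by
        rw [div_le_div_iff₀ (by linarith) (by norm_num)]
        nlinarith
      linarith
    have hpt : ((1:ℝ)/2, (29:ℝ)/20) ∈ U := by
      constructor
      · norm_num
      refine ⟨by norm_num, by norm_num, by norm_num, by norm_num⟩
    have hne : (f '' U).Nonempty := ⟨f ((1:ℝ)/2, (29:ℝ)/20), Set.mem_image_of_mem _ hpt⟩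
    have hbdd : BddAbove (f '' U) := ⟨1/Real.sqrt 2, by rintro x ⟨p, hp, rfl⟩; exact hub p hp⟩
    apply le_antisymm
    · exact csSup_le hne (by rintro x ⟨p, hp, rfl⟩; exact hub p hp)
    · rw [le_csSup_iff hbdd hne]
      intro b hb
      by_contra hlt
      push_neg at hlt
      rw [h12] at hlt
      have hc0 : 0 < Real.sqrt 2 / 2 - b := by linarith
      obtain ⟨δ, hδ0, hδc, hδh⟩ : ∃ δ : ℝ, 0 < δ ∧ δ ≤ Real.sqrt 2 / 2 - b ∧ δ ≤ 1/2 :=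
        ⟨min (Real.sqrt 2 / 2 - b) (1/2), lt_min hc0 (by norm_num), min_le_left _ _,
          min_le_right _ _⟩
      obtain ⟨u, hu⟩ : ∃ u : ℝ, u = 3 - 2*Real.sqrt 2 + δ := ⟨_, rfl⟩
      have hu0 : 0 < u := by rw [hu]; nlinarith
      have hu1 : u < 1 := by rw [hu]; nlinarith
      obtain ⟨r, hrnn, hr2⟩ : ∃ r : ℝ, 0 ≤ r ∧ r^2 = u :=
        ⟨Real.sqrt u, Real.sqrt_nonneg _, Real.sq_sqrt hu0.le⟩
      have hr1 : r < 1 := by nlinarith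
      have hrgt : Real.sqrt 2 - 1 < r := by nlinarith [hu0, sq_nonneg (r - (Real.sqrt 2 - 1))]
      have hmem : ((u, 2*r) : ℝ × ℝ) ∈ U := by
        refine ⟨hu0, hu1, ?_, ?_, ?_⟩
        · show 1 - u < 2*r
          nlinarith
        · show 2*r < 1 + u
          nlinarith [mul_pos (sub_pos.mpr hr1) (sub_pos.mpr hr1)]
        · show 4*u ≤ (2*r)^2
          nlinarith
      have hfb : f (u, 2*r) ≤ b := hb (Set.mem_image_of_mem _ hmem)
      have hfval : f (u, 2*r) = 1/2 + (1-u)/4 := by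
        show 1/2 + ((1+u)^2 - (2*r)^2)/(4*(1-u)) = 1/2 + (1-u)/4
        have h1u : (1:ℝ) - u ≠ 0 := by intro h; linarith
        have h4r : (2*r)^2 = 4*u := by linear_combination 4*hr2
        rw [h4r]
        have : (1+u)^2 - 4*u = (1-u)*(1-u) := by ring
        rw [this]
        rw [show (4:ℝ)*(1-u) = (1-u)*4 by ring, mul_div_mul_left _ _ h1u]
      rw [hfval, hu] at hfb
      -- hfb : 1/2 + (1 - (3 - 2√2 + δ))/4 ≤ b, i.e. √2/2 - δ/4 ≤ b; δ ≤ √2/2 - b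
      linarith
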